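/- arXiv:2210.06583 — 3 statements merged into one kernel-verified Lean document; each statement's English description precedes it below -/
import Mathlib

section
/- Let A ∈ ℂ^{N×N} be a complex matrix, B ∈ ℂ^N a complex vector, and u : ℝ → ℂ a continuous function. Define x : ℝ → ℂ^N by x(t) = ∫_0^t e^{(t−s)A} B u(s) ds, where e^{M} denotes the matrix exponential. Then x(0) = 0 and, for every t ∈ ℝ, x is differentiable at t with derivative x′(t) = A x(t) + B u(t). (The convolution form of the 1D state space model solves its defining linear ODE.) -/
/-!
Since `t • a` and `-s • a` commute, `exp ((t - s) • a) = exp (t • a) * exp (-s • a)`, so the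
Duhamel integral `y t = ∫₀ᵗ exp ((t - s) • a) * f s ds` equals
`exp (t • a) * ∫₀ᵗ exp (-s • a) * f s ds`.
The product rule and the fundamental theorem of calculus then give
`y' t = a * y t + exp (t • a) * exp (-t • a) * f t = a * y t + f t`.
The state of the theorem is `x t = y t *ᵥ B` for `a = A` and `f s = u s • 1`, and `M ↦ M *ᵥ B` is
continuous linear.
-/

open MeasureTheory intervalIntegral NormedSpace

section BanachAlgebra

variable {𝔸 : Type*} [NormedRing 𝔸] [NormedAlgebra ℝ 𝔸] [CompleteSpace 𝔸]

theorem exp_sub_smul_eq_mul (a : 𝔸) (t s : ℝ) :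
    exp ((t - s) • a) = exp (t • a) * exp (-s • a) := by
  have mem_ball : ∀ b : 𝔸, b ∈ Metric.eball 0 (expSeries ℝ 𝔸).radius := fun b => by
    simp [expSeries_radius_eq_top]
  rw [← exp_add_of_commute_of_mem_ball (((Commute.refl a).smul_left t).smul_right _)
    (mem_ball _) (mem_ball _), ← add_smul, sub_eq_add_neg]

theorem hasDerivAt_of_eq_integral_exp_sub_smul_mul (a : 𝔸) {f : ℝ → 𝔸} (hf : Continuous f)
    {y : ℝ → 𝔸} (hy : ∀ t, y t = ∫ s in (0:ℝ)..t, exp ((t - s) • a) * f s) (t : ℝ) :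
    HasDerivAt y (a * y t + f t) t := by
  have hg : Continuous fun s => exp (-s • a) * f s :=
    ((differentiable_exp_smul_const ℝ a).continuous.comp continuous_neg).mul hf
  have factor : ∀ t, y t = exp (t • a) * ∫ s in (0:ℝ)..t, exp (-s • a) * f s := fun t => by
    simp_rw [hy, exp_sub_smul_eq_mul, mul_assoc]
    exact (ContinuousLinearMap.mul ℝ 𝔸 (exp (t • a))).intervalIntegral_comp_comm
      (hg.intervalIntegrable 0 t)
  have ftc : HasDerivAt (fun t => ∫ s in (0:ℝ)..t, exp (-s • a) * f s)
      (exp (-t • a) * f t) t :=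
    (hg.integral_hasStrictDerivAt 0 t).hasDerivAt
  rw [funext factor]
  convert (hasDerivAt_exp_smul_const' a t).fun_mul ftc using 1
  rw [mul_assoc, ← mul_assoc (exp (t • a)), ← exp_sub_smul_eq_mul, sub_self, zero_smul, exp_zero,
    one_mul]

end BanachAlgebra

section Matrix

attribute [local instance] Matrix.linftyOpNormedRing Matrix.linftyOpNormedAlgebra

variable {n 𝕜 : Type*} [Fintype n] [DecidableEq n] [RCLike 𝕜]

theorem Matrix.hasDerivAt_of_eq_integral_smul_exp_sub_smul_mulVec (A : Matrix n n 𝕜) (B : n → 𝕜)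
    {u : ℝ → 𝕜} (hu : Continuous u) {x : ℝ → n → 𝕜}
    (hx : ∀ t : ℝ, x t = ∫ s in (0:ℝ)..t, u s • (exp ((t - s) • A)).mulVec B) (t : ℝ) :
    HasDerivAt x (A.mulVec (x t) + u t • B) t := by
  let applyB := LinearMap.mkContinuous (𝕜 := ℝ) (E := Matrix n n 𝕜)
    { toFun M := M.mulVec B
      map_add' M M' := Matrix.add_mulVec M M' B
      map_smul' c M := Matrix.smul_mulVec c M B : Matrix n n 𝕜 →ₗ[ℝ] n → 𝕜 }
    ‖B‖ fun M => (Matrix.linfty_opNorm_mulVec M B).trans_eq (mul_comm _ _)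
  have applyB_apply : ∀ M, applyB M = M.mulVec B := fun _ => rfl
  have hf : Continuous fun s => u s • (1 : Matrix n n 𝕜) := hu.smul continuous_const
  let y t := ∫ s in (0:ℝ)..t, exp ((t - s) • A) * (u s • (1 : Matrix n n 𝕜))
  have hxy : ∀ t, x t = applyB (y t) := fun t => by
    rw [hx]
    refine Eq.trans ?_ (applyB.intervalIntegral_comp_comm ?_)
    · refine integral_congr fun s _ => ?_
      rw [applyB_apply, mul_smul_comm, mul_one, Matrix.smul_mulVec]
    · have : Continuous fun s : ℝ => exp ((t - s) • A) := by fun_prop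
      exact (this.mul hf).intervalIntegrable 0 t
  have hy : HasDerivAt y (A * y t + u t • 1) t :=
    hasDerivAt_of_eq_integral_exp_sub_smul_mul A hf (fun _ => rfl) t
  rw [funext hxy]
  refine (applyB.hasFDerivAt.comp_hasDerivAt t hy).congr_deriv ?_
  simp only [applyB_apply, Matrix.add_mulVec, ← Matrix.mulVec_mulVec, Matrix.smul_mulVec,
    Matrix.one_mulVec]

end Matrix

/-- **The convolution form of the 1D state space model solves its defining linear ODE.**
For `A ∈ ℂ^{N×N}`, `B ∈ ℂ^N` and continuous `u : ℝ → ℂ`, the state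
`x(t) = ∫_0^t e^{(t−s)A} B u(s) ds` satisfies `x(0) = 0` and
`x′(t) = A x(t) + B u(t)` for all `t`. -/
theorem ssm_state_solves_ode {N : ℕ}
    (A : Matrix (Fin N) (Fin N) ℂ) (B : Fin N → ℂ)
    (u : ℝ → ℂ) (hu : Continuous u)
    (x : ℝ → (Fin N → ℂ))
    (hx : ∀ t : ℝ, x t =
      ∫ s in (0:ℝ)..t, u s • (NormedSpace.exp ((t - s) • A)).mulVec B) :
    x 0 = 0 ∧ ∀ t : ℝ, HasDerivAt x (A.mulVec (x t) + u t • B) t :=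
  ⟨by simp [hx], A.hasDerivAt_of_eq_integral_smul_exp_sub_smul_mulVec B hu hx⟩
end

section
/- Let A^(1) ∈ ℂ^{N1×N1}, A^(2) ∈ ℂ^{N2×N2}, B^(1) ∈ ℂ^{N1}, B^(2) ∈ ℂ^{N2}, and let u : ℝ² → ℂ be continuous. Define the 2D SSM state x(t1,t2) = ∫_0^{t1} ∫_0^{t2} (e^{(t1−s1)A^(1)} B^(1)) ⊗ (e^{(t2−s2)A^(2)} B^(2)) u(s1,s2) ds2 ds1 and the partial state x_{1}(t1,t2) = ∫_0^{t2} e^{(t2−s2)A^(2)} B^(2) u(t1,s2) ds2 ∈ ℂ^{N2}. Then for all t1, t2 ≥ 0, the map t1 ↦ x(t1,t2) is differentiable and ∂x/∂t1 (t1,t2) = A^(1) ·^(1) x(t1,t2) + B^(1) ⊗ x_{1}(t1,t2), where (A^(1) ·^(1) X)_{n1,n2} = Σ_m A^(1)_{n1,m} X_{m,n2}. -/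
/-!
Write `𝒜 = A1 ·⁽¹⁾ (-)` for the contraction with `A1` over the first axis, an operator on
`ℂ^{N1×N2}`, so that `e^{t𝒜} = e^{tA1} ·⁽¹⁾ (-)`. Since `(e^{tA1}B1) ⊗ w = e^{t𝒜}(B1 ⊗ w)`,
the inner integral of the state collapses onto the partial state and
`x(t, t2) = ∫_0^t e^{(t-s)𝒜} (B1 ⊗ x₁(s, t2)) ds`.
The claim is Duhamel's formula for this variation-of-constants integral: factor `e^{t𝒜}` out
of the integral, then differentiate by the product rule and the fundamental theorem of calculus.
-/

open MeasureTheory intervalIntegral NormedSpace Matrix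

section Duhamel

variable {E : Type*} [NormedAddCommGroup E] [NormedSpace ℝ E] [CompleteSpace E]

theorem hasDerivAt_integral_exp_smul_sub_apply (A : E →L[ℝ] E) {g : ℝ → E}
    (hg : Continuous g) (t : ℝ) :
    HasDerivAt (fun r => ∫ s in (0:ℝ)..r, exp ((r - s) • A) (g s))
      (A (∫ s in (0:ℝ)..t, exp ((t - s) • A) (g s)) + g t) t := by
  let _ : NormedAlgebra ℚ (E →L[ℝ] E) := .restrictScalars ℚ ℝ _
  have hexp (a b : ℝ) : exp ((a + b) • A) = exp (a • A) * exp (b • A) := by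
    rw [add_smul, exp_add_of_commute (((Commute.refl A).smul_left a).smul_right b)]
  have hcont : Continuous fun s : ℝ => exp ((-s) • A) (g s) := by fun_prop
  have hsplit (r : ℝ) : ∫ s in (0:ℝ)..r, exp ((r - s) • A) (g s) =
      exp (r • A) (∫ s in (0:ℝ)..r, exp ((-s) • A) (g s)) := by
    rw [← ContinuousLinearMap.intervalIntegral_comp_comm _ (hcont.intervalIntegrable 0 r)]
    simp only [sub_eq_add_neg, hexp, mul_apply_eq_comp]
  have hprimitive := integral_hasDerivAt_right (hcont.intervalIntegrable 0 t)
    (hcont.stronglyMeasurableAtFilter _ _) hcont.continuousAt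
  have key := (hasDerivAt_exp_smul_const' A t).clm_apply hprimitive
  rwa [← mul_apply_eq_comp, ← hexp, add_neg_cancel, zero_smul, exp_zero,
    one_apply_eq_self, mul_apply_eq_comp, ← hsplit, ← funext hsplit] at key

end Duhamel

namespace Matrix

variable {m : Type*} [Fintype m] [DecidableEq m]

theorem continuous_exp : Continuous (exp : Matrix m m ℂ → Matrix m m ℂ) := by
  open scoped Norms.Operator in exact exp_continuous

variable (F : Type*) [NormedAddCommGroup F] [NormedSpace ℂ F]

/-- For `F = ℂ^{N2}` this is the contraction `A ·⁽¹⁾ X` over the first axis. -/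
noncomputable def toPiCLM : Matrix m m ℂ →ₐ[ℝ] ((m → F) →L[ℝ] (m → F)) where
  toFun M := ∑ i, ∑ j, M i j • (ContinuousLinearMap.single ℝ (fun _ => F) i).comp
    (ContinuousLinearMap.proj j)
  map_one' := by
    ext v i
    simp [one_apply, Pi.single_apply]
  map_mul' M N := by
    ext v i
    simpa [mul_apply, Pi.single_apply, Finset.sum_smul, mul_smul] using Finset.sum_comm
  map_zero' := by simp
  map_add' M N := by simp [add_smul, Finset.sum_add_distrib]
  commutes' r := by
    ext v i
    simp [algebraMap_matrix_apply, Pi.single_apply]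

variable {F}

theorem coe_toPiCLM : ⇑(toPiCLM F : Matrix m m ℂ →ₐ[ℝ] _) = fun M => ∑ i, ∑ j,
    M i j • (ContinuousLinearMap.single ℝ (fun _ => F) i).comp (ContinuousLinearMap.proj j) :=
  rfl

theorem toPiCLM_apply (M : Matrix m m ℂ) (v : m → F) (i : m) :
    toPiCLM F M v i = ∑ j, M i j • v j := by
  simp [coe_toPiCLM, Pi.single_apply]

theorem continuous_toPiCLM : Continuous (toPiCLM F : Matrix m m ℂ →ₐ[ℝ] _) := by
  rw [coe_toPiCLM]
  fun_prop

theorem exp_smul_toPiCLM (A : Matrix m m ℂ) (t : ℝ) :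
    exp (t • toPiCLM F A) = toPiCLM F (exp (t • A)) := by
  let _ : NormedAlgebra ℚ ((m → F) →L[ℝ] (m → F)) := .restrictScalars ℚ ℝ _
  rw [← map_smul]
  open scoped Norms.Operator in exact (map_exp _ continuous_toPiCLM _).symm

theorem toPiCLM_apply_smul_const (M : Matrix m m ℂ) (b : m → ℂ) (w : F) :
    toPiCLM F M (fun j => b j • w) = fun i => (M *ᵥ b) i • w := by
  ext i
  simp [toPiCLM_apply, mulVec, dotProduct, Finset.sum_smul, mul_smul]

end Matrix

theorem intervalIntegral.integral_pi_smul {ι F : Type*} [Fintype ι] [NormedAddCommGroup F]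
    [NormedSpace ℂ F] [CompleteSpace F] {a b : ℝ} {f : ℝ → F}
    (hf : IntervalIntegrable f volume a b) (c : ι → ℂ) :
    ∫ s in a..b, (fun i => c i • f s) = fun i => c i • ∫ s in a..b, f s :=
  (ContinuousLinearMap.pi fun i => c i • ContinuousLinearMap.id ℝ F).intervalIntegral_comp_comm
    hf

/-- **Differential equation for the 2D SSM state in the first time axis.**
With state
`x(t1,t2) = ∫_0^{t1}∫_0^{t2} (e^{(t1−s1)A1}B1) ⊗ (e^{(t2−s2)A2}B2) u(s1,s2) ds2 ds1`
(a tensor in `ℂ^{N1×N2}`, `(a ⊗ b)_{n1,n2} = a_{n1} b_{n2}`) and partial state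
`x₁(t1,t2) = ∫_0^{t2} e^{(t2−s2)A2}B2 u(t1,s2) ds2`, for all `t1, t2 ≥ 0` the
map `t1 ↦ x(t1,t2)` is differentiable with
`∂x/∂t1 = A1 ·⁽¹⁾ x(t1,t2) + B1 ⊗ x₁(t1,t2)`, where
`(A1 ·⁽¹⁾ X)_{n1,n2} = Σ_m (A1)_{n1,m} X_{m,n2}`. -/
theorem ssm2d_state_partial_deriv_fst {N1 N2 : ℕ}
    (A1 : Matrix (Fin N1) (Fin N1) ℂ) (A2 : Matrix (Fin N2) (Fin N2) ℂ)
    (B1 : Fin N1 → ℂ) (B2 : Fin N2 → ℂ)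
    (u : ℝ → ℝ → ℂ) (hu : Continuous fun p : ℝ × ℝ => u p.1 p.2)
    (x : ℝ → ℝ → (Fin N1 → Fin N2 → ℂ))
    (hx : ∀ t1 t2 : ℝ, x t1 t2 =
      ∫ s1 in (0:ℝ)..t1, ∫ s2 in (0:ℝ)..t2,
        u s1 s2 • fun n1 n2 =>
          (NormedSpace.exp ((t1 - s1) • A1)).mulVec B1 n1 *
          (NormedSpace.exp ((t2 - s2) • A2)).mulVec B2 n2)
    (x1 : ℝ → ℝ → (Fin N2 → ℂ))
    (hx1 : ∀ t1 t2 : ℝ, x1 t1 t2 =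
      ∫ s2 in (0:ℝ)..t2,
        u t1 s2 • (NormedSpace.exp ((t2 - s2) • A2)).mulVec B2) :
    ∀ t1 t2 : ℝ, 0 ≤ t1 → 0 ≤ t2 →
      HasDerivAt (fun r : ℝ => x r t2)
        ((fun n1 n2 => ∑ m, A1 n1 m * x t1 t2 m n2) +
          fun n1 n2 => B1 n1 * x1 t1 t2 n2) t1 := by
  intro t1 t2 _ _
  set g : ℝ → Fin N1 → Fin N2 → ℂ := fun s1 n1 => B1 n1 • x1 s1 t2
  have hresponse : Continuous fun s2 : ℝ => exp ((t2 - s2) • A2) *ᵥ B2 :=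
    (continuous_exp.comp (by fun_prop)).matrix_mulVec continuous_const
  have hg : Continuous g := by
    have hx1_cont : Continuous fun s1 => x1 s1 t2 := by
      simp_rw [hx1]
      exact continuous_parametric_intervalIntegral_of_continuous'
        (hu.smul (hresponse.comp continuous_snd)) _ _
    fun_prop
  have hstate (r : ℝ) :
      x r t2 = ∫ s1 in (0:ℝ)..r, exp ((r - s1) • toPiCLM (Fin N2 → ℂ) A1) (g s1) := by
    rw [hx]
    refine integral_congr fun s1 _ => ?_
    have hint :
        IntervalIntegrable (fun s2 => u s1 s2 • exp ((t2 - s2) • A2) *ᵥ B2) volume 0 t2 :=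
      (by fun_prop : Continuous _).intervalIntegrable _ _
    simp only [exp_smul_toPiCLM, g, toPiCLM_apply_smul_const]
    rw [hx1, ← integral_pi_smul hint]
    refine integral_congr fun s2 _ => ?_
    ext n1 n2
    simp only [Pi.smul_apply, smul_eq_mul]
    ring
  have hduhamel := hasDerivAt_integral_exp_smul_sub_apply (toPiCLM (Fin N2 → ℂ) A1) hg t1
  rw [← funext hstate, ← hstate] at hduhamel
  refine hduhamel.congr_deriv (congrArg₂ _ ?_ rfl)
  ext n1 n2
  simp [toPiCLM_apply]
end

section
/- Let A^(1) ∈ ℂ^{N1×N1}, A^(2) ∈ ℂ^{N2×N2}, B^(1) ∈ ℂ^{N1}, B^(2) ∈ ℂ^{N2}, and let u : ℝ² → ℂ be continuous. Define the 2D SSM state x(t1,t2) = ∫_0^{t1} ∫_0^{t2} (e^{(t1−s1)A^(1)} B^(1)) ⊗ (e^{(t2−s2)A^(2)} B^(2)) u(s1,s2) ds2 ds1 and the partial state x_{2}(t1,t2) = ∫_0^{t1} e^{(t1−s1)A^(1)} B^(1) u(s1,t2) ds1 ∈ ℂ^{N1}. Then for all t1, t2 ≥ 0, the map t2 ↦ x(t1,t2)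 is differentiable and ∂x/∂t2 (t1,t2) = A^(2) ·^(2) x(t1,t2) + x_{2}(t1,t2) ⊗ B^(2), where (A^(2) ·^(2) X)_{n1,n2} = Σ_m A^(2)_{n2,m} X_{n1,m}. -/
/-!
The kernel is a tensor product, so integrating over `s1` first (Fubini) shows that each row
`r ↦ x t1 r n1` is the mild solution `∫_0^r exp ((r - s) • A2) (f s) ds` of the one-dimensional
model driven by `f s = x2 t1 s n1 • B2`. Writing it as
`exp (r • A2) (∫_0^r exp ((-s) • A2) (f s) ds)`, the product rule and the fundamental theorem
of calculus give the derivative `A2 (x t1 r n1) + f r`.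
-/

open MeasureTheory intervalIntegral
open scoped Matrix

namespace Matrix

variable {n 𝕜 : Type*} [Fintype n] [DecidableEq n] [RCLike 𝕜]

variable (n 𝕜) in
noncomputable def mulVecCLM : Matrix n n 𝕜 →ₐ[ℝ] ((n → 𝕜) →L[ℝ] (n → 𝕜)) :=
  AlgHom.ofLinearMap
    { toFun A := ((mulVecLin A).restrictScalars ℝ).toContinuousLinearMap
      map_add' A B := by ext; simp
      map_smul' c A := by ext; simp }
    (by ext; simp) (by intro A B; ext; simp [mulVec_mulVec])

@[simp]
theorem mulVecCLM_apply (A : Matrix n n 𝕜) (v : n → 𝕜) : mulVecCLM n 𝕜 A v = A *ᵥ v := rfl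

theorem exp_mulVec (A : Matrix n n 𝕜) (v : n → 𝕜) :
    NormedSpace.exp A *ᵥ v = NormedSpace.exp (mulVecCLM n 𝕜 A) v := by
  -- `map_exp` needs a complete normed algebra; any norm inducing the product topology will do.
  open scoped Norms.Operator in
  let +nondep : NormedAlgebra ℚ (Matrix n n 𝕜) := .restrictScalars ℚ ℝ _
  let +nondep : NormedAlgebra ℚ ((n → 𝕜) →L[ℝ] (n → 𝕜)) := .restrictScalars ℚ ℝ _
  have := NormedSpace.map_exp (F := Matrix n n 𝕜 →+* ((n → 𝕜) →L[ℝ] (n → 𝕜)))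
    (mulVecCLM n 𝕜).toRingHom
    (LinearMap.continuous_of_finiteDimensional (mulVecCLM n 𝕜).toLinearMap) A
  exact congr($this v)

theorem _root_.Continuous.matrix_exp_smul_mulVec {α : Type*} [TopologicalSpace α] {f : α → ℝ}
    (hf : Continuous f) (A : Matrix n n 𝕜) (v : n → 𝕜) :
    Continuous fun x => NormedSpace.exp (f x • A) *ᵥ v := by
  simp_rw [exp_mulVec, map_smul]
  exact ((differentiable_exp_smul_const ℝ (mulVecCLM n 𝕜 A)).continuous.comp hf).clm_apply
    continuous_const

end Matrix

theorem NormedSpace.exp_sub_smul {𝔸 : Type*} [NormedRing 𝔸] [NormedAlgebra ℝ 𝔸] [CompleteSpace 𝔸]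
    (a : 𝔸) (r s : ℝ) : exp ((r - s) • a) = exp (r • a) * exp ((-s) • a) := by
  let +nondep : NormedAlgebra ℚ 𝔸 := .restrictScalars ℚ ℝ _
  rw [← exp_add_of_commute (((Commute.refl a).smul_left r).smul_right (-s)), ← add_smul,
    sub_eq_add_neg]

theorem hasDerivAt_integral_exp_sub_smul_apply {E : Type*} [NormedAddCommGroup E]
    [NormedSpace ℝ E] [CompleteSpace E] (A : E →L[ℝ] E) {f : ℝ → E} (hf : Continuous f) (t : ℝ) :
    HasDerivAt (fun r => ∫ s in 0..r, NormedSpace.exp ((r - s) • A) (f s))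
      (A (∫ s in 0..t, NormedSpace.exp ((t - s) • A) (f s)) + f t) t := by
  have hg : Continuous fun s : ℝ => NormedSpace.exp ((-s) • A) (f s) :=
    ((differentiable_exp_smul_const ℝ A).continuous.comp continuous_neg).clm_apply hf
  have hfactor : ∀ r, ∫ s in 0..r, NormedSpace.exp ((r - s) • A) (f s) =
      NormedSpace.exp (r • A) (∫ s in 0..r, NormedSpace.exp ((-s) • A) (f s)) := fun r => by
    simp_rw [NormedSpace.exp_sub_smul A r, mul_apply_eq_comp]
    exact (NormedSpace.exp (r • A)).intervalIntegral_comp_comm (hg.intervalIntegrable 0 r)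
  have hinv : NormedSpace.exp (t • A) * NormedSpace.exp ((-t) • A) = 1 := by
    simpa using (NormedSpace.exp_sub_smul A t t).symm
  simp_rw [hfactor]
  convert (hasDerivAt_exp_smul_const' A t).clm_apply
    (hg.integral_hasStrictDerivAt 0 t).hasDerivAt using 1
  rw [mul_apply_eq_comp, ← mul_apply_eq_comp (NormedSpace.exp (t • A)), hinv, one_apply_eq_self]

namespace intervalIntegral

theorem integral_integral_swap {E : Type*} [NormedAddCommGroup E] [NormedSpace ℝ E]
    {f : ℝ → ℝ → E} (hf : Continuous fun p : ℝ × ℝ => f p.1 p.2) (a b c d : ℝ) :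
    ∫ x in a..b, ∫ y in c..d, f x y = ∫ y in c..d, ∫ x in a..b, f x y := by
  have hint : Integrable (Function.uncurry f)
      ((volume.restrict (Set.uIoc a b)).prod (volume.restrict (Set.uIoc c d))) := by
    rw [Measure.prod_restrict]
    exact (hf.continuousOn.integrableOn_compact (isCompact_uIcc.prod isCompact_uIcc)).mono_set
      (Set.prod_mono Set.uIoc_subset_uIcc Set.uIoc_subset_uIcc)
  simp_rw [intervalIntegral_eq_integral_uIoc, MeasureTheory.integral_smul]
  rw [MeasureTheory.integral_integral_swap hint, smul_comm]

theorem integral_apply {ι : Type*} [Fintype ι] {E : ι → Type*} [∀ i, NormedAddCommGroup (E i)]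
    [∀ i, NormedSpace ℝ (E i)] [∀ i, CompleteSpace (E i)] {f : ℝ → ∀ i, E i} {a b : ℝ}
    (hf : IntervalIntegrable f volume a b) (i : ι) :
    (∫ t in a..b, f t) i = ∫ t in a..b, f t i :=
  ((ContinuousLinearMap.proj (R := ℝ) (φ := E) i).intervalIntegral_comp_comm hf).symm

theorem integral_integral_smul_tensor_apply {𝕜 ι κ : Type*} [RCLike 𝕜] [Fintype ι] [Fintype κ]
    {u : ℝ → ℝ → 𝕜} (hu : Continuous fun p : ℝ × ℝ => u p.1 p.2) {v : ℝ → ι → 𝕜}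
    (hv : Continuous v) {w : ℝ → κ → 𝕜} (hw : Continuous w) (a b c d : ℝ) (i : ι) :
    (∫ s in a..b, ∫ s' in c..d, u s s' • fun i k => v s i * w s' k) i =
      ∫ s' in c..d, (∫ s in a..b, u s s' • v s) i • w s' := by
  have huvw : Continuous fun p : ℝ × ℝ => u p.1 p.2 • fun i k => v p.1 i * w p.2 k := by
    fun_prop
  rw [integral_integral_swap huvw,
    integral_apply ((by fun_prop : Continuous _).intervalIntegrable _ _)]
  refine integral_congr fun s' _ => ?_
  rw [integral_apply ((by fun_prop : Continuous _).intervalIntegrable _ _),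
    integral_apply ((by fun_prop : Continuous _).intervalIntegrable _ _), ← integral_smul_const]
  congr 1 with s k
  simp [mul_assoc]

end intervalIntegral

/-- **Differential equation for the 2D SSM state in the second time axis.**
With state
`x(t1,t2) = ∫_0^{t1}∫_0^{t2} (e^{(t1−s1)A1}B1) ⊗ (e^{(t2−s2)A2}B2) u(s1,s2) ds2 ds1`
(a tensor in `ℂ^{N1×N2}`, `(a ⊗ b)_{n1,n2} = a_{n1} b_{n2}`) and partial state
`x₂(t1,t2) = ∫_0^{t1} e^{(t1−s1)A1}B1 u(s1,t2) ds1`, for all `t1, t2 ≥ 0` the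
map `t2 ↦ x(t1,t2)` is differentiable with
`∂x/∂t2 = A2 ·⁽²⁾ x(t1,t2) + x₂(t1,t2) ⊗ B2`, where
`(A2 ·⁽²⁾ X)_{n1,n2} = Σ_m (A2)_{n2,m} X_{n1,m}`. -/
theorem ssm2d_state_partial_deriv_snd {N1 N2 : ℕ}
    (A1 : Matrix (Fin N1) (Fin N1) ℂ) (A2 : Matrix (Fin N2) (Fin N2) ℂ)
    (B1 : Fin N1 → ℂ) (B2 : Fin N2 → ℂ)
    (u : ℝ → ℝ → ℂ) (hu : Continuous fun p : ℝ × ℝ => u p.1 p.2)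
    (x : ℝ → ℝ → (Fin N1 → Fin N2 → ℂ))
    (hx : ∀ t1 t2 : ℝ, x t1 t2 =
      ∫ s1 in (0:ℝ)..t1, ∫ s2 in (0:ℝ)..t2,
        u s1 s2 • fun n1 n2 =>
          (NormedSpace.exp ((t1 - s1) • A1)).mulVec B1 n1 *
          (NormedSpace.exp ((t2 - s2) • A2)).mulVec B2 n2)
    (x2 : ℝ → ℝ → (Fin N1 → ℂ))
    (hx2 : ∀ t1 t2 : ℝ, x2 t1 t2 =
      ∫ s1 in (0:ℝ)..t1,
        u s1 t2 • (NormedSpace.exp ((t1 - s1) • A1)).mulVec B1) :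
    ∀ t1 t2 : ℝ, 0 ≤ t1 → 0 ≤ t2 →
      HasDerivAt (fun r : ℝ => x t1 r)
        ((fun n1 n2 => ∑ m, A2 n2 m * x t1 t2 n1 m) +
          fun n1 n2 => x2 t1 t2 n1 * B2 n2) t2 := by
  intro t1 t2 _ _
  have hexp1 := (continuous_sub_left t1).matrix_exp_smul_mulVec A1 B1
  rw [hasDerivAt_pi]
  intro n1
  have hstate : ∀ r, x t1 r n1 = ∫ s2 in 0..r,
      NormedSpace.exp ((r - s2) • Matrix.mulVecCLM (Fin N2) ℂ A2) (x2 t1 s2 n1 • B2) := by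
    intro r
    rw [hx, integral_integral_smul_tensor_apply hu hexp1
      ((continuous_sub_left r).matrix_exp_smul_mulVec A2 B2)]
    refine integral_congr fun s2 _ => ?_
    rw [hx2, ← map_smul, ← Matrix.exp_mulVec, Matrix.mulVec_smul]
  have hforce : Continuous fun s2 => x2 t1 s2 n1 • B2 := by
    simp_rw [hx2]
    have hx2_cont := continuous_parametric_intervalIntegral_of_continuous'
      (f := fun s2 s1 => u s1 s2 • NormedSpace.exp ((t1 - s1) • A1) *ᵥ B1)
      ((hu.comp continuous_swap).smul (hexp1.comp continuous_snd)) (μ := volume) 0 t1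
    exact ((continuous_apply n1).comp hx2_cont).smul continuous_const
  rw [funext hstate]
  convert hasDerivAt_integral_exp_sub_smul_apply _ hforce t2 using 1
  ext n2
  simp [← hstate, Matrix.mulVec, dotProduct]
end
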